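/- Let H be a finite group and let p and q be distinct primes dividing the order of H. Assume that: (1) the Sylow q-subgroups of H are cyclic, and the Sylow p-subgroups of H have order p^s; (2) p does not divide q − 1; (3) for every integer m with 1 ≤ m ≤ s, q does not divide p^m − 1; and (4) H contains no element of order pq. Then H contains no subgroup of order p^a q^b with a > 0 and b > 0; in particular, H is not solvable. -/

import Mathlib

/-!
Let `B` be a subgroup of order `p^a q^b` with `a, b > 0` (so `a ≤ s`), and `Q` a Sylow
`q`-subgroup of `B`, of order `q^k`. The number of Sylow `q`-subgroups of `B` divides `p^a` and
is `≡ 1 mod q`, so (3) forces `Q ⊴ B`. An element `x` of order `p` acts on the cyclic group `Q` by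
conjugation, and `|Aut Q| = q^(k-1) (q-1)` is prime to `p` by (2); hence `x` centralizes `Q`, and
`x y` has order `pq` for `y ∈ Q` of order `q`, contradicting (4).

A solvable group whose order is divisible by `p` and `q` does have such a subgroup. Take a
nontrivial normal `t`-subgroup `N` (a Sylow subgroup of the last nontrivial term of the derived
series). If `t ∈ {p, q}`, then `N` joined with a Sylow subgroup for the other prime works;
otherwise a subgroup of `G ⧸ N` found by induction lifts to `G` by Schur–Zassenhaus.
-/

open Subgroup

section

variable {G : Type*} [Group G]

theorem IsPGroup.exists_card_eq_pow_of_ne_bot {p : ℕ} [Fact p.Prime] [Finite G] {K : Subgroup G}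
    (hK : IsPGroup p K) (hK' : K ≠ ⊥) : ∃ k, 0 < k ∧ Nat.card K = p ^ k := by
  obtain ⟨k, hk⟩ := IsPGroup.iff_card.mp hK
  refine ⟨k, Nat.pos_of_ne_zero ?_, hk⟩
  rintro rfl
  exact hK' (Subgroup.card_eq_one.mp (hk.trans (pow_zero p)))

theorem IsPGroup.isCyclic_of_forall_sylow {q : ℕ} [Fact q.Prime] [Finite G]
    (hcyc : ∀ Q : Sylow q G, IsCyclic Q) {K : Subgroup G} (hK : IsPGroup q K) : IsCyclic K := by
  obtain ⟨Q, hQ⟩ := hK.exists_le_sylow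
  have := hcyc Q
  exact Subgroup.isCyclic_of_le hQ

theorem Sylow.normal_of_card_eq_pow_mul_pow [Finite G] {p q a b : ℕ} [Fact q.Prime]
    (hp : p.Prime) (hcard : Nat.card G = p ^ a * q ^ b)
    (hpow : ∀ m : ℕ, 1 ≤ m → m ≤ a → ¬ q ∣ p ^ m - 1) (Q : Sylow q G) :
    (Q : Subgroup G).Normal := by
  have hindex : (Q : Subgroup G).index ∣ p ^ a := by
    have hcop : (Q : Subgroup G).index.Coprime (q ^ b) :=
      (Nat.Coprime.pow_left b ((Nat.Prime.coprime_iff_not_dvd Fact.out).mpr Q.not_dvd_index)).symm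
    exact hcop.dvd_of_dvd_mul_right (hcard ▸ Q.index_dvd_card)
  obtain ⟨m, hma, hm⟩ := (Nat.dvd_prime_pow hp).mp (Q.card_dvd_index.trans hindex)
  have hm0 : m = 0 := by
    by_contra hm0
    refine hpow m (Nat.one_le_iff_ne_zero.mpr hm0) hma ?_
    exact (Nat.modEq_iff_dvd' (Nat.one_le_pow _ _ hp.pos)).mp (hm ▸ card_sylow_modEq_one q G).symm
  have : Subsingleton (Sylow q G) := (Nat.card_eq_one_iff_unique.mp (by rw [hm, hm0, pow_zero])).1
  exact Q.normal_of_subsingleton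

theorem commute_of_coprime_card_mulAut {N : Subgroup G} [N.Normal] {x : G}
    (hx : (orderOf x).Coprime (Nat.card (MulAut N))) {y : G} (hy : y ∈ N) : Commute x y := by
  have hconj : MulAut.conjNormal x = (1 : MulAut N) :=
    orderOf_eq_one_iff.mp
      (Nat.eq_one_of_dvd_coprimes hx (orderOf_map_dvd _ x) (orderOf_dvd_natCard _))
  have := congrArg (fun f : MulAut N => ((f ⟨y, hy⟩ : N) : G)) hconj
  simp only [MulAut.conjNormal_apply, MulAut.one_apply] at this
  exact (eq_mul_inv_iff_mul_eq.mp this.symm).symm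

theorem exists_orderOf_eq_mul_of_card_eq_pow_mul_pow [Finite G] {p q a b : ℕ}
    (hp : p.Prime) (hq : q.Prime) (hpq : p ≠ q) (hcard : Nat.card G = p ^ a * q ^ b)
    (ha : 0 < a) (hb : 0 < b) (hcyc : ∀ Q : Sylow q G, IsCyclic Q) (hpq1 : ¬ p ∣ q - 1)
    (hpow : ∀ m : ℕ, 1 ≤ m → m ≤ a → ¬ q ∣ p ^ m - 1) :
    ∃ x : G, orderOf x = p * q := by
  have := Fact.mk hp
  have := Fact.mk hq
  have hpG : p ∣ Nat.card G := hcard ▸ (dvd_pow_self p ha.ne').mul_right _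
  have hqG : q ∣ Nat.card G := hcard ▸ (dvd_pow_self q hb.ne').mul_left _
  obtain ⟨Q⟩ : Nonempty (Sylow q G) := inferInstance
  have := Q.normal_of_card_eq_pow_mul_pow hp hcard hpow
  have := hcyc Q
  obtain ⟨k, hk, hQk⟩ := Q.isPGroup'.exists_card_eq_pow_of_ne_bot (Q.ne_bot_of_dvd_card hqG)
  obtain ⟨x, hx⟩ := exists_prime_orderOf_dvd_card' p hpG
  obtain ⟨y, hy⟩ := exists_prime_orderOf_dvd_card' q (Q.dvd_card_of_dvd_card hqG)
  have hcop : (orderOf x).Coprime (Nat.card (MulAut Q)) := by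
    rw [IsCyclic.card_mulAut, hQk, Nat.totient_prime_pow hq hk, hx]
    exact Nat.Coprime.mul_right (Nat.Coprime.pow_right _ ((Nat.coprime_primes hp hq).mpr hpq))
      ((Nat.Prime.coprime_iff_not_dvd hp).mpr hpq1)
  refine ⟨x * y, ?_⟩
  rw [(commute_of_coprime_card_mulAut hcop y.2).orderOf_mul_eq_mul_orderOf_of_coprime
    (by rw [hx, Subgroup.orderOf_coe, hy]; exact (Nat.coprime_primes hp hq).mpr hpq),
    hx, Subgroup.orderOf_coe, hy]

theorem Subgroup.card_sup_of_coprime [Finite G] {H N : Subgroup G} [N.Normal]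
    (hcop : (Nat.card H).Coprime (Nat.card N)) :
    Nat.card ↥(H ⊔ N) = Nat.card H * Nat.card N := by
  refine le_antisymm ?_ (Nat.le_of_dvd Nat.card_pos
    (hcop.mul_dvd_of_dvd_of_dvd (card_dvd_of_le le_sup_left) (card_dvd_of_le le_sup_right)))
  rw [← SetLike.coe_sort_coe, mul_normal]
  exact Set.natCard_mul_le

theorem exists_subgroup_card_eq_of_coprime_quotient [Finite G] {N : Subgroup G} [N.Normal]
    (K : Subgroup (G ⧸ N)) (hcop : (Nat.card N).Coprime (Nat.card K)) :
    ∃ L : Subgroup G, Nat.card L = Nat.card K := by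
  set B := K.comap (QuotientGroup.mk' N)
  have hB : Nat.card B = Nat.card N * Nat.card K := QuotientGroup.card_preimage_mk N K
  have hNB : N ≤ B := by
    simpa [B] using MonoidHom.ker_le_comap (QuotientGroup.mk' N) K
  have hM : Nat.card (N.subgroupOf B) = Nat.card N :=
    Nat.card_congr (subgroupOfEquivOfLe hNB).toEquiv
  have hindex : (N.subgroupOf B).index = Nat.card K := by
    have h := (N.subgroupOf B).card_mul_index
    rw [hM, hB] at h
    exact Nat.eq_of_mul_eq_mul_left Nat.card_pos h
  obtain ⟨L, hL⟩ := exists_right_complement'_of_coprime (hM ▸ hindex ▸ hcop)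
  refine ⟨L.map B.subtype, ?_⟩
  rw [card_map_of_injective B.subtype_injective]
  have h := hL.card_mul_card
  rw [hM, hB] at h
  exact Nat.eq_of_mul_eq_mul_left Nat.card_pos h

theorem Group.IsSolvable.exists_normal_isMulCommutative_ne_bot [Group.IsSolvable G]
    [Nontrivial G] : ∃ A : Subgroup G, A.Normal ∧ IsMulCommutative A ∧ A ≠ ⊥ := by
  obtain ⟨n, hn, hn'⟩ : ∃ n, derivedSeries G n ≠ ⊥ ∧ derivedSeries G (n + 1) = ⊥ := by
    by_contra! h
    obtain ⟨k, hk⟩ := Group.IsSolvable.solvable (G := G)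
    refine (?_ : ∀ n, derivedSeries G n ≠ ⊥) k hk
    intro n
    induction n with
    | zero => rw [derivedSeries_zero]; exact top_ne_bot
    | succ n ih => exact h n ih
  exact ⟨_, derivedSeries_normal G n, commutator_self_eq_bot_iff.mp hn', hn⟩

theorem exists_normal_isPGroup_ne_bot_of_isMulCommutative [Finite G] {A : Subgroup G} [A.Normal]
    [IsMulCommutative A] (hA : A ≠ ⊥) :
    ∃ t : ℕ, t.Prime ∧ ∃ N : Subgroup G, N.Normal ∧ IsPGroup t N ∧ N ≠ ⊥ := by
  set t := (Nat.card A).minFac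
  have ht : t.Prime := Nat.minFac_prime ((one_lt_card_iff_ne_bot A).mpr hA).ne'
  have := Fact.mk ht
  obtain ⟨T⟩ : Nonempty (Sylow t A) := inferInstance
  have : (T : Subgroup A).Characteristic := T.characteristic_of_normal inferInstance
  refine ⟨t, ht, (T : Subgroup A).map A.subtype, inferInstance, T.isPGroup'.map _, ?_⟩
  rw [Ne, map_eq_bot_iff_of_injective _ A.subtype_injective]
  exact T.ne_bot_of_dvd_card (Nat.minFac_dvd _)

theorem Group.IsSolvable.exists_normal_isPGroup_ne_bot [Finite G] [Group.IsSolvable G]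
    [Nontrivial G] : ∃ t : ℕ, t.Prime ∧ ∃ N : Subgroup G, N.Normal ∧ IsPGroup t N ∧ N ≠ ⊥ := by
  obtain ⟨A, hA, _, hA'⟩ := exists_normal_isMulCommutative_ne_bot (G := G)
  exact exists_normal_isPGroup_ne_bot_of_isMulCommutative hA'

theorem exists_card_eq_pow_mul_pow_of_isPGroup_normal [Finite G] {p q : ℕ} [Fact p.Prime]
    [Fact q.Prime] (hpq : p ≠ q) (hqd : q ∣ Nat.card G) {N : Subgroup G} [N.Normal]
    (hN : IsPGroup p N) (hN' : N ≠ ⊥) :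
    ∃ (B : Subgroup G) (a b : ℕ), 0 < a ∧ 0 < b ∧ Nat.card B = p ^ a * q ^ b := by
  obtain ⟨Q⟩ : Nonempty (Sylow q G) := inferInstance
  obtain ⟨a, ha, hNa⟩ := hN.exists_card_eq_pow_of_ne_bot hN'
  obtain ⟨b, hb, hQb⟩ := Q.isPGroup'.exists_card_eq_pow_of_ne_bot (Q.ne_bot_of_dvd_card hqd)
  refine ⟨Q ⊔ N, a, b, ha, hb, ?_⟩
  rw [card_sup_of_coprime (IsPGroup.coprime_card_of_ne q p hpq.symm _ _ Q.isPGroup' hN),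
    hNa, hQb, mul_comm]

theorem Group.IsSolvable.exists_card_eq_pow_mul_pow [Finite G] [Group.IsSolvable G] {p q : ℕ}
    (hp : p.Prime) (hq : q.Prime) (hpq : p ≠ q) (hpd : p ∣ Nat.card G) (hqd : q ∣ Nat.card G) :
    ∃ (B : Subgroup G) (a b : ℕ), 0 < a ∧ 0 < b ∧ Nat.card B = p ^ a * q ^ b := by
  have := Fact.mk hp
  have := Fact.mk hq
  induction hn : Nat.card G using Nat.strong_induction_on generalizing G with
  | _ n ih =>
  have : Nontrivial G := Finite.one_lt_card_iff_nontrivial.mp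
    (lt_of_lt_of_le hp.one_lt (Nat.le_of_dvd Nat.card_pos hpd))
  obtain ⟨t, ht, N, hN, htN, hN'⟩ := exists_normal_isPGroup_ne_bot (G := G)
  have := Fact.mk ht
  by_cases htp : t = p
  · subst htp
    exact exists_card_eq_pow_mul_pow_of_isPGroup_normal hpq hqd htN hN'
  by_cases htq : t = q
  · subst htq
    obtain ⟨B, a, b, ha, hb, hB⟩ :=
      exists_card_eq_pow_mul_pow_of_isPGroup_normal hpq.symm hpd htN hN'
    exact ⟨B, b, a, hb, ha, hB.trans (mul_comm _ _)⟩
  obtain ⟨k, hk, hNk⟩ := htN.exists_card_eq_pow_of_ne_bot hN'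
  have hcard := card_eq_card_quotient_mul_card_subgroup N
  have hdvd_quotient {r : ℕ} (hr : r.Prime) (hrt : t ≠ r) (hrd : r ∣ Nat.card G) :
      r ∣ Nat.card (G ⧸ N) := by
    rw [hcard, hNk] at hrd
    exact (Nat.Coprime.pow_right k ((Nat.coprime_primes hr ht).mpr hrt.symm)).dvd_of_dvd_mul_right
      hrd
  have hlt : Nat.card (G ⧸ N) < n := by
    rw [← hn, hcard, hNk]
    exact lt_mul_of_one_lt_right Nat.card_pos (Nat.one_lt_pow hk.ne' ht.one_lt)
  obtain ⟨K, a, b, ha, hb, hK⟩ := ih _ hlt (hdvd_quotient hp htp hpd) (hdvd_quotient hq htq hqd) rfl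
  obtain ⟨L, hL⟩ := exists_subgroup_card_eq_of_coprime_quotient K (by
    rw [hNk, hK]
    exact Nat.Coprime.mul_right (Nat.coprime_pow_primes k a ht hp htp)
      (Nat.coprime_pow_primes k b ht hq htq))
  exact ⟨L, a, b, ha, hb, hL.trans hK⟩

end

/-- Lemma 3.2: Let `H` be a finite group, `p ≠ q` primes dividing `|H|` such that
(1) Sylow `q`-subgroups of `H` are cyclic and Sylow `p`-subgroups have order `p^s`;
(2) `p ∤ q - 1`; (3) `q ∤ p^m - 1` for `1 ≤ m ≤ s`; (4) `H` has no element of order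
`pq`. Then `H` has no subgroup of order `p^a q^b` with `a, b > 0`; in particular, `H`
is not solvable. -/
theorem stmt_8 {H : Type*} [Group H] [Finite H] {p q s : ℕ}
    (hp : p.Prime) (hq : q.Prime) (hpq : p ≠ q)
    (hpd : p ∣ Nat.card H) (hqd : q ∣ Nat.card H)
    (h1q : ∀ Q : Sylow q H, IsCyclic Q)
    (h1p : ∀ P : Sylow p H, Nat.card P = p ^ s)
    (h2 : ¬ p ∣ (q - 1))
    (h3 : ∀ m : ℕ, 1 ≤ m → m ≤ s → ¬ q ∣ (p ^ m - 1))
    (h4 : ∀ x : H, orderOf x ≠ p * q) :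
    (∀ (B : Subgroup H) (a b : ℕ), 0 < a → 0 < b → Nat.card B ≠ p ^ a * q ^ b) ∧
    ¬ IsSolvable H := by
  have := Fact.mk hp
  have := Fact.mk hq
  have hno_subgroup (B : Subgroup H) (a b : ℕ) (ha : 0 < a) (hb : 0 < b) :
      Nat.card B ≠ p ^ a * q ^ b := by
    intro hB
    have has : a ≤ s := by
      have hdvd := (default : Sylow p H).pow_dvd_card_of_pow_dvd_card
        ((hB ▸ dvd_mul_right _ _ : p ^ a ∣ Nat.card B).trans (card_subgroup_dvd_card B))
      rwa [h1p, Nat.pow_dvd_pow_iff_le_right hp.one_lt] at hdvd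
    have hcyc (Q : Sylow q B) : IsCyclic Q := by
      have := (Q.isPGroup'.map B.subtype).isCyclic_of_forall_sylow h1q
      exact isCyclic_of_surjective _ (equivMapOfInjective _ _ B.subtype_injective).symm.surjective
    obtain ⟨x, hx⟩ := exists_orderOf_eq_mul_of_card_eq_pow_mul_pow hp hq hpq hB ha hb hcyc h2
      fun m hm hma => h3 m hm (hma.trans has)
    exact h4 x (by rw [Subgroup.orderOf_coe, hx])
  refine ⟨hno_subgroup, fun hsolv => ?_⟩
  obtain ⟨B, a, b, ha, hb, hB⟩ := hsolv.exists_card_eq_pow_mul_pow hp hq hpq hpd hqd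
  exact hno_subgroup B a b ha hb hB
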